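/- arXiv:1606.01483 — 7 statements merged into one kernel-verified Lean document; each statement's English description precedes it below -/
import Mathlib

section
/- Let ε₀ > 0 and let f : ℂ → ℂ be holomorphic (complex differentiable) on the open horizontal strip S = {z ∈ ℂ : |Im z| < ε₀} and 2π-periodic, i.e. f(z + 2π) = f(z) for all z ∈ S. Then for every ε with 0 < ε < ε₀ there exists a constant C > 0 such that the Fourier coefficients a_k = (1/2π) ∫_{−π}^{π} f(s) e^{−iks} ds satisfy |a_k| ≤ C e^{−ε|k|} for all integers k. -/
open Complex Real

/-!
Shift the contour of the Fourier integral from the real axis to the line `Im z = y` with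
`|y| = ε` and the sign of `y` opposite to that of `k`. The vertical sides of the rectangle cancel
by periodicity, so Cauchy's theorem equates the two integrals, and on the shifted line
`|e^{-ikz}| = e^{ky} = e^{-ε|k|}`, while `f` stays bounded on the compact rectangle.
-/

open Set
open scoped Interval

theorem integral_add_mul_I_eq_of_vertical_sides_eq {E : Type*} [NormedAddCommGroup E]
    [NormedSpace ℂ E] [CompleteSpace E] {g : ℂ → E} {a b c d : ℝ}
    (hg : DifferentiableOn ℂ g ([[a, b]] ×ℂ [[c, d]]))
    (hside : ∀ t ∈ [[c, d]], g (b + t * I) = g (a + t * I)) :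
    ∫ x : ℝ in a..b, g (x + c * I) = ∫ x : ℝ in a..b, g (x + d * I) := by
  have hrect := integral_boundary_rect_eq_zero_of_differentiableOn g (a + c * I) (b + d * I)
    (by simpa using hg)
  simp only [add_re, ofReal_re, mul_re, I_re, mul_zero, ofReal_im, I_im, mul_one, sub_self,
    add_zero, add_im, mul_im, zero_add] at hrect
  rwa [intervalIntegral.integral_congr hside, add_sub_cancel_right, sub_eq_zero] at hrect

theorem norm_exp_neg_I_mul_add_mul_I (k s y : ℝ) :
    ‖exp (-I * k * (s + y * I))‖ = Real.exp (k * y) := by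
  rw [norm_exp]
  congr 1
  simp [mul_re, mul_im]

theorem exp_neg_I_mul_int_add_two_pi (k : ℤ) (z : ℂ) :
    exp (-I * k * (z + 2 * π)) = exp (-I * k * z) := by
  rw [show -I * k * (z + 2 * π) = -I * k * z + ((-k : ℤ) : ℂ) * (2 * π * I) by push_cast; ring,
    Complex.exp_add, exp_int_mul_two_pi_mul_I, mul_one]

theorem integral_mul_exp_eq_integral_add_mul_I {ε₀ y : ℝ} {f : ℂ → ℂ}
    (hf : DifferentiableOn ℂ f {z : ℂ | |z.im| < ε₀})
    (hper : ∀ z ∈ {z : ℂ | |z.im| < ε₀}, f (z + 2 * π) = f z) (hy : |y| < ε₀) (k : ℤ) :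
    ∫ s in (-π : ℝ)..π, f s * exp (-I * k * s) =
      ∫ s in (-π : ℝ)..π, f (s + y * I) * exp (-I * k * (s + y * I)) := by
  have him : ∀ t ∈ [[0, y]], |t| < ε₀ := fun t ht => by
    simpa using (abs_sub_left_of_mem_uIcc ht).trans_lt (by simpa using hy : |y - 0| < ε₀)
  have hg : DifferentiableOn ℂ (fun z => f z * exp (-I * k * z)) ([[-π, π]] ×ℂ [[0, y]]) :=
    (hf.mono fun z hz => him _ hz.2).mul (by fun_prop)
  have hside : ∀ t ∈ [[0, y]], f (π + t * I) * exp (-I * k * (π + t * I)) =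
      f ((-π : ℝ) + t * I) * exp (-I * k * ((-π : ℝ) + t * I)) := fun t ht => by
    have hshift : ((-π : ℝ) : ℂ) + t * I + 2 * π = π + t * I := by push_cast; ring
    rw [← hshift, hper _ (by simpa using him t ht), exp_neg_I_mul_int_add_two_pi]
  simpa using integral_add_mul_I_eq_of_vertical_sides_eq hg hside

theorem norm_fourier_integral_add_mul_I_le {f : ℂ → ℂ} {y M : ℝ} (k : ℝ)
    (hM : ∀ s ∈ Icc (-π) π, ‖f (s + y * I)‖ ≤ M) :
    ‖(1 / (2 * π)) * ∫ s in (-π : ℝ)..π, f (s + y * I) * exp (-I * k * (s + y * I))‖ ≤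
      M * Real.exp (k * y) := by
  have hint : ‖∫ s in (-π : ℝ)..π, f (s + y * I) * exp (-I * k * (s + y * I))‖ ≤
      M * Real.exp (k * y) * |π - -π| := by
    refine intervalIntegral.norm_integral_le_of_norm_le_const fun s hs => ?_
    rw [uIoc_of_le (by linarith [pi_pos])] at hs
    rw [norm_mul, norm_exp_neg_I_mul_add_mul_I]
    gcongr
    exact hM s (Ioc_subset_Icc_self hs)
  rw [norm_mul, norm_div, norm_one, norm_mul, RCLike.norm_ofNat, norm_real,
    Real.norm_of_nonneg pi_pos.le]
  calc 1 / (2 * π) * ‖_‖ ≤ 1 / (2 * π) * (M * Real.exp (k * y) * |π - -π|) := by gcongr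
    _ = M * Real.exp (k * y) := by
      rw [abs_of_pos (by linarith [pi_pos])]; field_simp; ring

theorem exists_abs_le_mul_eq_neg_mul_abs {ε : ℝ} (hε : 0 ≤ ε) (k : ℝ) :
    ∃ y, |y| ≤ ε ∧ k * y = -ε * |k| := by
  rcases le_total 0 k with hk | hk
  · exact ⟨-ε, by simp [abs_of_nonneg hε], by rw [abs_of_nonneg hk]; ring⟩
  · exact ⟨ε, by simp [abs_of_nonneg hε], by rw [abs_of_nonpos hk]; ring⟩

theorem fourier_coeff_exp_decay_general (ε₀ : ℝ) (f : ℂ → ℂ)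
    (hf : DifferentiableOn ℂ f {z : ℂ | |z.im| < ε₀})
    (hper : ∀ z ∈ {z : ℂ | |z.im| < ε₀}, f (z + 2 * π) = f z) :
    ∀ ε : ℝ, 0 < ε → ε < ε₀ →
      ∃ C : ℝ, 0 < C ∧ ∀ k : ℤ,
        ‖(1 / (2 * π)) * ∫ s in (-π : ℝ)..π, f s * Complex.exp (-Complex.I * k * s)‖
          ≤ C * Real.exp (-ε * |k|) := by
  intro ε hε hεε₀
  have hK : Icc (-π) π ×ℂ Icc (-ε) ε ⊆ {z : ℂ | |z.im| < ε₀} := fun z hz =>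
    (abs_le.2 hz.2).trans_lt hεε₀
  obtain ⟨M, hM⟩ := (isCompact_Icc.reProdIm isCompact_Icc).exists_bound_of_continuousOn
    (hf.continuousOn.mono hK)
  refine ⟨max M 1, by positivity, fun k => ?_⟩
  obtain ⟨y, hyε, hky⟩ := exists_abs_le_mul_eq_neg_mul_abs hε.le (k : ℝ)
  rw [integral_mul_exp_eq_integral_add_mul_I hf hper (hyε.trans_lt hεε₀) k, Int.cast_abs, ← hky]
  refine norm_fourier_integral_add_mul_I_le k fun s hs => (hM _ ?_).trans (le_max_left _ _)
  exact ⟨by simpa using hs, by simpa using abs_le.1 hyε⟩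

/-- Paley–Wiener type lemma: a `2π`-periodic function holomorphic on the horizontal strip
`{z : |Im z| < ε₀}` has Fourier coefficients decaying like `e^{-ε|k|}` for every `ε < ε₀`. -/
theorem fourier_coeff_exp_decay (ε₀ : ℝ) (hε₀ : 0 < ε₀) (f : ℂ → ℂ)
    (hf : DifferentiableOn ℂ f {z : ℂ | |z.im| < ε₀})
    (hper : ∀ z ∈ {z : ℂ | |z.im| < ε₀}, f (z + 2 * π) = f z) :
    ∀ ε : ℝ, 0 < ε → ε < ε₀ →
      ∃ C : ℝ, 0 < C ∧ ∀ k : ℤ,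
        ‖(1 / (2 * π)) * ∫ s in (-π : ℝ)..π, f s * Complex.exp (-Complex.I * k * s)‖
          ≤ C * Real.exp (-ε * |k|) :=
  fourier_coeff_exp_decay_general ε₀ f hf hper
end

section
/- Let U ⊆ ℂ be an open set that is symmetric under complex conjugation, let q : ℂ → ℂ be holomorphic on U, and let t ∈ U be a real number with q'(t) ≠ 0. Define q*(s) = conj(q(conj(s))) for s ∈ U. Then, as s tends to t with s ≠ t, the expression q'(t)/(q(t) − q(s)) − conj(q'(t))/(conj(q(t)) − q*(s)) tends to the limit (−q'(t)·conj(q''(t)) + conj(q'(t))·q''(t)) / (2 |q'(t)|²). -/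
/-!
Near a simple point `t`, `F s = q'(t) / (q t - q s) + (s - t)⁻¹` has a removable singularity with
value `q''(t) / (2 q'(t))`. Since `t` is real, `conj (conj s - t)⁻¹ = (s - t)⁻¹`, so the kernel is
`F s - conj (F (conj s))`: the two poles cancel and the limit is `w - conj w` for that value `w`.
-/

open Complex Filter Topology

section RemovableSingularity

variable {𝕜 : Type*} [NontriviallyNormedField 𝕜]

theorem HasFPowerSeriesAt.deriv_deriv {E : Type*} [NormedAddCommGroup E] [NormedSpace 𝕜 E]
    [CompleteSpace E] {f : 𝕜 → E} {p : FormalMultilinearSeries 𝕜 𝕜 E} {z : 𝕜}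
    (hp : HasFPowerSeriesAt f p z) : deriv (deriv f) z = (2 : 𝕜) • p.coeff 2 := by
  obtain ⟨r, hr⟩ := hp
  have h2 : deriv (deriv f) = iteratedDeriv 2 f := by simp [iteratedDeriv_succ]
  rw [h2, iteratedDeriv_eq_iteratedFDeriv, ← hr.factorial_smul (1 : 𝕜) 2, Nat.factorial_two,
    two_smul, two_smul]
  rfl

/-- With `f = f z + (s - z) • G₁ s` and `G₁ = G₁ z + (s - z) • G₂ s`, the expression equals
`G₂ s / G₁ s`, which is continuous at `z`. -/
theorem HasFPowerSeriesAt.tendsto_deriv_div_sub_add_inv {f : 𝕜 → 𝕜}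
    {p : FormalMultilinearSeries 𝕜 𝕜 𝕜} {z : 𝕜} (hp : HasFPowerSeriesAt f p z)
    (hf' : deriv f z ≠ 0) :
    Tendsto (fun s => deriv f z / (f z - f s) + (s - z)⁻¹) (𝓝[≠] z)
      (𝓝 (p.coeff 2 / deriv f z)) := by
  set G₁ := dslope f z
  set G₂ := dslope G₁ z
  have hp₁ : HasFPowerSeriesAt G₁ p.fslope z := hp.has_fpower_series_dslope_fslope
  have hG₁z : G₁ z = deriv f z := dslope_same f z
  have hG₂z : G₂ z = p.coeff 2 := by
    rw [show G₂ z = dslope G₁ z z from rfl, dslope_same, hp₁.deriv]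
    exact FormalMultilinearSeries.coeff_fslope
  have hlim : Tendsto (fun s => G₂ s / G₁ s) (𝓝 z) (𝓝 (p.coeff 2 / deriv f z)) := by
    rw [← hG₁z, ← hG₂z]
    exact hp₁.has_fpower_series_dslope_fslope.continuousAt.tendsto.div
      hp₁.continuousAt.tendsto (hG₁z ▸ hf')
  refine (hlim.mono_left nhdsWithin_le_nhds).congr' ?_
  filter_upwards [eventually_nhdsWithin_of_eventually_nhds
    (hp₁.continuousAt.eventually_ne (hG₁z ▸ hf')), self_mem_nhdsWithin] with s hG₁s hs
  have hsz : s - z ≠ 0 := sub_ne_zero.mpr hs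
  have e₁ : f s - f z = (s - z) * G₁ s := (sub_smul_dslope f z s).symm
  have e₂ : G₁ s - deriv f z = (s - z) * G₂ s := hG₁z ▸ (sub_smul_dslope G₁ z s).symm
  rw [show f z - f s = -((s - z) * G₁ s) by linear_combination -e₁,
    show deriv f z = G₁ s - (s - z) * G₂ s by linear_combination -e₂]
  field_simp
  ring

theorem AnalyticAt.tendsto_deriv_div_sub_add_inv [CharZero 𝕜] [CompleteSpace 𝕜] {f : 𝕜 → 𝕜}
    {z : 𝕜} (hf : AnalyticAt 𝕜 f z) (hf' : deriv f z ≠ 0) :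
    Tendsto (fun s => deriv f z / (f z - f s) + (s - z)⁻¹) (𝓝[≠] z)
      (𝓝 (deriv (deriv f) z / (2 * deriv f z))) := by
  obtain ⟨p, hp⟩ := hf
  rw [hp.deriv_deriv, smul_eq_mul, mul_div_mul_left _ _ two_ne_zero]
  exact hp.tendsto_deriv_div_sub_add_inv hf'

end RemovableSingularity

theorem Complex.tendsto_conj_nhdsNE_ofReal (x : ℝ) :
    Tendsto (starRingEnd ℂ) (𝓝[≠] (x : ℂ)) (𝓝[≠] (x : ℂ)) := by
  refine tendsto_nhdsWithin_iff.mpr ⟨?_, ?_⟩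
  · simpa using (continuous_conj.tendsto (x : ℂ)).mono_left nhdsWithin_le_nhds
  · filter_upwards [self_mem_nhdsWithin] with s hs h
    exact hs (by simpa using congrArg (starRingEnd ℂ) h)

theorem Complex.div_two_mul_sub_conj {a b : ℂ} (ha : a ≠ 0) :
    b / (2 * a) - starRingEnd ℂ (b / (2 * a))
      = (-a * starRingEnd ℂ b + starRingEnd ℂ a * b) / (2 * (‖a‖ : ℂ) ^ 2) := by
  have ha' : starRingEnd ℂ a ≠ 0 := (map_ne_zero _).mpr ha
  rw [← Complex.ofReal_pow, ← Complex.normSq_eq_norm_sq, Complex.normSq_eq_conj_mul_self,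
    map_div₀, map_mul, map_ofNat]
  field_simp
  ring

theorem np_kernel_removable_singularity_general (U : Set ℂ) (hU : IsOpen U)
    (q : ℂ → ℂ) (hq : DifferentiableOn ℂ q U)
    (t : ℝ) (ht : (t : ℂ) ∈ U) (hq' : deriv q t ≠ 0) :
    Tendsto
      (fun s : ℂ =>
        deriv q t / (q t - q s)
          - (starRingEnd ℂ) (deriv q t)
              / ((starRingEnd ℂ) (q t) - (starRingEnd ℂ) (q ((starRingEnd ℂ) s))))
      (nhdsWithin (t : ℂ) {(t : ℂ)}ᶜ)
      (nhds ((-(deriv q t) * (starRingEnd ℂ) (deriv (deriv q) t)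
          + (starRingEnd ℂ) (deriv q t) * deriv (deriv q) t)
        / (2 * (‖deriv q t‖ : ℂ) ^ 2))) := by
  have hF := (hq.analyticAt (hU.mem_nhds ht)).tendsto_deriv_div_sub_add_inv hq'
  have hFconj := (continuous_conj.tendsto _).comp (hF.comp (tendsto_conj_nhdsNE_ofReal t))
  rw [← div_two_mul_sub_conj hq']
  refine (hF.sub hFconj).congr fun s => ?_
  simp only [Function.comp_apply, map_add, map_div₀, map_inv₀, map_sub, conj_conj, conj_ofReal]
  ring

/-- The Neumann–Poincaré kernel has a removable singularity on the diagonal: for a conjugation-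
symmetric open set `U`, `q` holomorphic on `U`, and a real point `t ∈ U` with `q'(t) ≠ 0`,
the expression `q'(t)/(q(t) - q(s)) - conj(q'(t))/(conj(q(t)) - q*(s))`, where
`q*(s) = conj (q (conj s))`, tends to
`(-q'(t) conj(q''(t)) + conj(q'(t)) q''(t)) / (2|q'(t)|²)` as `s → t`, `s ≠ t`. -/
theorem np_kernel_removable_singularity (U : Set ℂ) (hU : IsOpen U)
    (hUsymm : ∀ z ∈ U, (starRingEnd ℂ) z ∈ U)
    (q : ℂ → ℂ) (hq : DifferentiableOn ℂ q U)
    (t : ℝ) (ht : (t : ℂ) ∈ U) (hq' : deriv q t ≠ 0) :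
    Tendsto
      (fun s : ℂ =>
        deriv q t / (q t - q s)
          - (starRingEnd ℂ) (deriv q t)
              / ((starRingEnd ℂ) (q t) - (starRingEnd ℂ) (q ((starRingEnd ℂ) s))))
      (nhdsWithin (t : ℂ) {(t : ℂ)}ᶜ)
      (nhds ((-(deriv q t) * (starRingEnd ℂ) (deriv (deriv q) t)
          + (starRingEnd ℂ) (deriv q t) * deriv (deriv q) t)
        / (2 * (‖deriv q t‖ : ℂ) ^ 2))) :=
  np_kernel_removable_singularity_general U hU q hq t ht hq'
end

section
/- Let a > b > 0 and q(z) = ((a+b)/2) e^{iz} + ((a−b)/2) e^{−iz}. Suppose t ∈ ℂ with Re t ∈ [−π, π) and |Im t| < log((a+b)/(a−b)), and s ∈ [−π, π) is real. If q(t) = q(s), then t = s. -/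
open Complex Real

/-!
With `w = e^{iz}` one has `q(z) = A w + B w⁻¹`, where `A = (a+b)/2` and `B = (a-b)/2`, so
`q(t) = q(s)` factors as `(e^{it} - e^{is}) (A e^{it} e^{is} - B) = 0`. The first factor vanishes
only for `t = s`, since `z ↦ e^{iz}` is injective on the strip `-π ≤ Re z < π`. The second one
forces `|A| e^{-Im t} = |B|`, i.e. `Im t = log |A / B|`, so `t` lies on the boundary of the
strip.
-/

theorem eq_or_mul_mul_eq_of_mul_add_mul_inv_eq {K : Type*} [Field K] {A B u v : K}
    (hu : u ≠ 0) (hv : v ≠ 0) (h : A * u + B * u⁻¹ = A * v + B * v⁻¹) :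
    u = v ∨ A * u * v = B := by
  have hfactor : (u - v) * (A * u * v - B) = 0 := by
    field_simp at h
    linear_combination h
  rcases mul_eq_zero.mp hfactor with huv | hB
  · exact .inl (sub_eq_zero.mp huv)
  · exact .inr (sub_eq_zero.mp hB)

theorem Complex.eq_of_exp_I_mul_eq {t s : ℂ} (ht₁ : -π ≤ t.re) (ht₂ : t.re < π)
    (hs₁ : -π ≤ s.re) (hs₂ : s.re < π) (h : exp (I * t) = exp (I * s)) : t = s := by
  -- Multiplying by `-I` turns the half-open interval `[-π, π)` for `Re` into `(-π, π]` for `Im`.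
  have him (z : ℂ) : (-I * z).im = -z.re := by simp
  have hneg : exp (-I * t) = exp (-I * s) := by
    simp only [neg_mul, exp_neg, h]
  have := exp_inj_of_neg_pi_lt_of_le_pi (x := -I * t) (y := -I * s)
    (by rw [him]; linarith) (by rw [him]; linarith) (by rw [him]; linarith) (by rw [him]; linarith)
    hneg
  simpa only [neg_mul, neg_inj, mul_eq_mul_left_iff, I_ne_zero, or_false] using this

theorem Complex.norm_exp_I_mul_mul_exp_I_mul_ofReal (t : ℂ) (s : ℝ) :
    ‖exp (I * t) * exp (I * s)‖ = Real.exp (-t.im) := by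
  rw [← exp_add, norm_exp]
  simp

/-- For `A = 0` this holds only because `Real.log 0 = 0`. -/
theorem abs_log_div_le_of_ofReal_mul_eq {A B y : ℝ} {w : ℂ} (hw : ‖w‖ = Real.exp y)
    (h : (A : ℂ) * w = B) : |Real.log (B / A)| ≤ |y| := by
  have hnorm : |A| * Real.exp y = |B| := by
    simpa [hw] using congrArg norm h
  rcases eq_or_ne A 0 with rfl | hA
  · simp
  rw [← Real.log_abs, abs_div, ← hnorm, mul_div_cancel_left₀ _ (abs_ne_zero.mpr hA), Real.log_exp]

theorem ellipse_param_condition_G_general (a b : ℝ)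
    (t : ℂ) (ht₁ : -π ≤ t.re) (ht₂ : t.re < π)
    (ht₃ : |t.im| < Real.log ((a + b) / (a - b)))
    (s : ℝ) (hs₁ : -π ≤ s) (hs₂ : s < π)
    (h : (((a + b) / 2 : ℝ) : ℂ) * Complex.exp (Complex.I * t)
          + (((a - b) / 2 : ℝ) : ℂ) * Complex.exp (-Complex.I * t)
        = (((a + b) / 2 : ℝ) : ℂ) * Complex.exp (Complex.I * s)
          + (((a - b) / 2 : ℝ) : ℂ) * Complex.exp (-Complex.I * s)) :
    t = (s : ℂ) := by
  simp only [neg_mul, Complex.exp_neg] at h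
  rcases eq_or_mul_mul_eq_of_mul_add_mul_inv_eq (Complex.exp_ne_zero _) (Complex.exp_ne_zero _) h with hexp | hroot
  · exact eq_of_exp_I_mul_eq ht₁ ht₂ (by simpa using hs₁) (by simpa using hs₂) hexp
  · rw [mul_assoc] at hroot
    have hlog := abs_log_div_le_of_ofReal_mul_eq
      (norm_exp_I_mul_mul_exp_I_mul_ofReal t s) hroot
    have hratio : ((a - b) / 2) / ((a + b) / 2) = ((a + b) / (a - b))⁻¹ := by
      rw [inv_div, div_div_div_cancel_right₀ two_ne_zero]
    rw [hratio, Real.log_inv, abs_neg, abs_neg] at hlog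
    linarith [le_abs_self (Real.log ((a + b) / (a - b)))]

/-- The complexified ellipse parametrization `q(z) = ((a+b)/2) e^{iz} + ((a-b)/2) e^{-iz}`
satisfies the injectivity condition (G) on the strip `|Im z| < log((a+b)/(a-b))`. -/
theorem ellipse_param_condition_G (a b : ℝ) (hab : a > b) (hb : b > 0)
    (t : ℂ) (ht₁ : -π ≤ t.re) (ht₂ : t.re < π)
    (ht₃ : |t.im| < Real.log ((a + b) / (a - b)))
    (s : ℝ) (hs₁ : -π ≤ s) (hs₂ : s < π)
    (h : (((a + b) / 2 : ℝ) : ℂ) * Complex.exp (Complex.I * t)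
          + (((a - b) / 2 : ℝ) : ℂ) * Complex.exp (-Complex.I * t)
        = (((a + b) / 2 : ℝ) : ℂ) * Complex.exp (Complex.I * s)
          + (((a - b) / 2 : ℝ) : ℂ) * Complex.exp (-Complex.I * s)) :
    t = (s : ℂ) :=
  ellipse_param_condition_G_general a b t ht₁ ht₂ ht₃ s hs₁ hs₂ h
end

section
/- Let a > b > 0 and q(z) = ((a+b)/2) e^{iz} + ((a−b)/2) e^{−iz}. For every real s, setting t = −s + i·log((a+b)/(a−b)), one has q(t) = q(s) while t ≠ s. -/
open Complex Real

/-- The injectivity condition (G) for the complexified ellipse parametrization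
`q(z) = ((a+b)/2) e^{iz} + ((a-b)/2) e^{-iz}` fails on the boundary of the strip:
for every real `s`, the point `t = -s + i log((a+b)/(a-b))` satisfies `q(t) = q(s)`
but `t ≠ s`. -/
theorem ellipse_param_boundary_failure (a b : ℝ) (hab : a > b) (hb : b > 0) (s : ℝ) :
    ((((a + b) / 2 : ℝ) : ℂ)
          * Complex.exp (Complex.I * ((-s : ℂ) + Complex.I * (Real.log ((a + b) / (a - b)) : ℂ)))
        + (((a - b) / 2 : ℝ) : ℂ)
          * Complex.exp (-Complex.I * ((-s : ℂ) + Complex.I * (Real.log ((a + b) / (a - b)) : ℂ)))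
      = (((a + b) / 2 : ℝ) : ℂ) * Complex.exp (Complex.I * s)
        + (((a - b) / 2 : ℝ) : ℂ) * Complex.exp (-Complex.I * s))
    ∧ ((-s : ℂ) + Complex.I * (Real.log ((a + b) / (a - b)) : ℂ)) ≠ (s : ℂ) := by
  set L : ℝ := Real.log ((a + b) / (a - b)) with hLdef
  have hab' : (0:ℝ) < a - b := by linarith
  have hab2 : (0:ℝ) < a + b := by linarith
  have hr : (1:ℝ) < (a + b) / (a - b) := by
    rw [lt_div_iff₀ hab']; linarith
  have hL : Real.exp L = (a + b) / (a - b) := Real.exp_log (by positivity)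
  have hLpos : 0 < L := Real.log_pos hr
  constructor
  · have e1 : Complex.I * ((-s : ℂ) + Complex.I * (L : ℂ)) = -(Complex.I * s) + -(L : ℂ) := by
      linear_combination (L : ℂ) * Complex.I_mul_I
    have e2 : -Complex.I * ((-s : ℂ) + Complex.I * (L : ℂ)) = Complex.I * s + (L : ℂ) := by
      linear_combination -(L : ℂ) * Complex.I_mul_I
    have hLC : Complex.exp (L : ℂ) = (((a + b) / (a - b) : ℝ) : ℂ) := by
      rw [← Complex.ofReal_exp, hL]
    have hLC' : Complex.exp (-(L : ℂ)) = ((((a + b) / (a - b) : ℝ)) : ℂ)⁻¹ := by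
      rw [Complex.exp_neg, hLC]
    have hs : Complex.exp (-Complex.I * (s : ℂ)) = (Complex.exp (Complex.I * s))⁻¹ := by
      rw [neg_mul, Complex.exp_neg]
    rw [e1, e2, Complex.exp_add, Complex.exp_add, hLC, hLC', hs, Complex.exp_neg]
    have h1 : (((a + b) / (a - b) : ℝ) : ℂ) ≠ 0 := by
      push_cast
      refine div_ne_zero ?_ ?_ <;> [exact_mod_cast hab2.ne'; exact_mod_cast hab'.ne']
    have h2 : ((a : ℂ) - b) ≠ 0 := by
      have : ((a - b : ℝ) : ℂ) ≠ 0 := by exact_mod_cast hab'.ne'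
      push_cast at this; exact this
    have h3 : ((a : ℂ) + b) ≠ 0 := by
      have : ((a + b : ℝ) : ℂ) ≠ 0 := by exact_mod_cast hab2.ne'
      push_cast at this; exact this
    push_cast
    field_simp
    ring
  · intro h
    have := congrArg Complex.im h
    simp at this
    linarith
end

section
/- Let 0 < A < 1/2 and q(z) = e^{iz} + A e^{2iz}. Then (i) for every real s, |e^{is} + 1/A| ≥ 1/A − 1, with equality when s = π; and (ii) if t ∈ ℂ with Re t ∈ [−π, π) and |Im t| < log(1/A − 1), and s ∈ [−π, π) is real, then q(t) = q(s) implies t = s. -/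
open Complex Real

/-!
With `a = e^{it}` and `b = e^{is}` the equation `q t = q s` factors as
`(a - b) (1 + A (a + b)) = 0`. On the strip `‖a‖ = e^{-Im t} < 1/A - 1`, while `‖b‖ = 1`, so
`A ‖a + b‖ < 1` and the second factor cannot vanish. Hence `e^{it} = e^{is}`, and `t = s`
because both real parts lie in the same period `[-π, π)`.
-/

namespace Complex

theorem sub_one_le_norm_add_ofReal {z : ℂ} (hz : ‖z‖ = 1) {c : ℝ} (hc : 0 ≤ c) :
    c - 1 ≤ ‖z + c‖ := by
  have h := norm_sub_norm_le (c : ℂ) (-z)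
  rwa [norm_neg, hz, norm_real, Real.norm_of_nonneg hc, sub_neg_eq_add, add_comm] at h

theorem eq_of_add_mul_sq_eq {A a b : ℂ} (hab : ‖A‖ * (‖a‖ + ‖b‖) < 1)
    (h : a + A * a ^ 2 = b + A * b ^ 2) : a = b := by
  have hfac : (a - b) * (1 + A * (a + b)) = 0 := by linear_combination h
  have hne : 1 + A * (a + b) ≠ 0 := by
    intro h0
    have hnorm : ‖A * (a + b)‖ = 1 := by
      rw [show A * (a + b) = -1 by linear_combination h0, norm_neg, norm_one]
    have hlt : ‖A * (a + b)‖ < 1 :=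
      (norm_mul_le _ _).trans_lt
        ((mul_le_mul_of_nonneg_left (norm_add_le a b) (norm_nonneg A)).trans_lt hab)
    exact hlt.ne hnorm
  exact sub_eq_zero.1 ((mul_eq_zero.1 hfac).resolve_right hne)

theorem norm_exp_I_mul_lt_of_abs_im_lt_log {t : ℂ} {c : ℝ} (hc : 0 < c)
    (ht : |t.im| < Real.log c) : ‖exp (I * t)‖ < c := by
  rw [norm_exp, show (I * t).re = -t.im by simp]
  calc Real.exp (-t.im) ≤ Real.exp |t.im| := Real.exp_le_exp.2 (neg_le_abs _)
    _ < Real.exp (Real.log c) := Real.exp_lt_exp.2 ht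
    _ = c := Real.exp_log hc

theorem exp_two_mul_I_mul (t : ℂ) : exp (2 * I * t) = exp (I * t) ^ 2 := by
  rw [← exp_nat_mul]; ring_nf

/-- Rotating by `-I` turns the half-open strip `-π ≤ re < π` into `-π < im ≤ π`, where `exp`
is injective. -/
theorem exp_I_mul_inj_of_neg_pi_le_of_lt_pi {t s : ℂ} (ht₁ : -π ≤ t.re) (ht₂ : t.re < π)
    (hs₁ : -π ≤ s.re) (hs₂ : s.re < π) (h : exp (I * t) = exp (I * s)) : t = s := by
  have him (u : ℂ) : (-I * u).im = -u.re := by simp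
  have hinv : exp (-I * t) = exp (-I * s) := by
    rw [neg_mul, exp_neg, h, ← exp_neg, neg_mul]
  have := exp_inj_of_neg_pi_lt_of_le_pi (by rw [him]; linarith) (by rw [him]; linarith)
    (by rw [him]; linarith) (by rw [him]; linarith) hinv
  exact mul_left_cancel₀ (neg_ne_zero.2 I_ne_zero) this

end Complex

/-- For the limaçon parametrization `q(z) = e^{iz} + A e^{2iz}` with `0 < A < 1/2`:
(i) `|e^{is} + 1/A| ≥ 1/A - 1` for all real `s`, with equality at `s = π`;
(ii) the injectivity condition (G) holds on the strip `|Im z| < log(1/A - 1)`. -/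
theorem limacon_param_grauert (A : ℝ) (hA₀ : 0 < A) (hA₁ : A < 1 / 2) :
    (∀ s : ℝ, 1 / A - 1 ≤ ‖Complex.exp (Complex.I * s) + 1 / (A : ℂ)‖)
    ∧ (‖Complex.exp (Complex.I * (π : ℝ)) + 1 / (A : ℂ)‖ = 1 / A - 1)
    ∧ (∀ t : ℂ, -π ≤ t.re → t.re < π → |t.im| < Real.log (1 / A - 1) →
        ∀ s : ℝ, -π ≤ s → s < π →
          Complex.exp (Complex.I * t) + (A : ℂ) * Complex.exp (2 * Complex.I * t)
            = Complex.exp (Complex.I * s) + (A : ℂ) * Complex.exp (2 * Complex.I * s) →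
          t = (s : ℂ)) := by
  have hc : 0 < 1 / A - 1 := by
    have : 2 < 1 / A := by rw [lt_div_iff₀ hA₀]; linarith
    linarith
  have hinvA : 1 / (A : ℂ) = ((1 / A : ℝ) : ℂ) := by push_cast; rfl
  refine ⟨fun s => ?_, ?_, fun t ht₁ ht₂ htim s hs₁ hs₂ hq => ?_⟩
  · rw [hinvA]
    exact sub_one_le_norm_add_ofReal (norm_exp_I_mul_ofReal s) (by positivity)
  · rw [mul_comm, exp_pi_mul_I, hinvA, ← ofReal_one, ← ofReal_neg, ← ofReal_add, norm_real,
      Real.norm_of_nonneg (by linarith)]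
    ring
  · rw [exp_two_mul_I_mul, exp_two_mul_I_mul] at hq
    have hbound : ‖(A : ℂ)‖ * (‖exp (I * t)‖ + ‖exp (I * s)‖) < 1 := by
      rw [norm_real, Real.norm_of_nonneg hA₀.le, norm_exp_I_mul_ofReal]
      calc A * (‖exp (I * t)‖ + 1) < A * (1 / A - 1 + 1) := by
            gcongr; exact norm_exp_I_mul_lt_of_abs_im_lt_log hc htim
        _ = 1 := by field_simp; ring
    exact exp_I_mul_inj_of_neg_pi_le_of_lt_pi ht₁ ht₂ (by simpa using hs₁) (by simpa using hs₂)
      (eq_of_add_mul_sq_eq hbound hq)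
end

section
/- Let 0 < A < 1/2, set e = 2A, a = 1/(1 − e²), b = a√(1 − e²), and define g(z) = ((a+b)/2) z + ((a−b)/2) z^{−1} + a e for z ≠ 0, and h(w) = (−e w + 2)/(2w) for w ≠ 0. Let q₁(t) = h(g(e^{it})). Suppose t ∈ ℂ with Re t ∈ [−π, π) and |Im t| < log((1 + √(1 − 4A²))/(1 − √(1 − 4A²))), and s ∈ [−π, π) is real, and suppose g(e^{it}) ≠ 0 and g(e^{is}) ≠ 0. If q₁(t) = q₁(s), then t = s. -/
open Complex Real

/-!
The Möbius map `h w = -e/2 + 1/w` is injective on `w ≠ 0`, so `q₁ t = q₁ s` reduces to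
`g z = g u` for `z = exp (i t)`, `u = exp (i s)`. For the Joukowsky-type map `g` this means
`z = u` or `(a + b) z u = a - b`. The second case would force `|z| = |z u| = (a - b)/(a + b)`,
i.e. `Im t = log ((a + b)/(a - b))`, which lies on the boundary of the strip; in the first case
`t - s ∈ 2πℤ` and both real parts lie in `[-π, π)`, so `t = s`.
-/

theorem eq_of_neg_mul_add_two_div_two_mul_eq {K : Type*} [Field K] [NeZero (2 : K)] (e : K)
    {w₁ w₂ : K} (hw₁ : w₁ ≠ 0) (hw₂ : w₂ ≠ 0)
    (h : (-e * w₁ + 2) / (2 * w₁) = (-e * w₂ + 2) / (2 * w₂)) :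
    w₁ = w₂ := by
  field_simp at h
  refine mul_left_cancel₀ (two_ne_zero' K) ?_
  linear_combination -h

-- `(α z + β z⁻¹) - (α u + β u⁻¹) = (z - u) (α z u - β) / (z u)`
theorem eq_or_mul_mul_eq_of_joukowsky_eq {K : Type*} [Field K] {α β γ z u : K}
    (hz : z ≠ 0) (hu : u ≠ 0) (h : α * z + β * z⁻¹ + γ = α * u + β * u⁻¹ + γ) :
    z = u ∨ α * (z * u) = β := by
  have hfactor : (z - u) * (α * (z * u) - β) = 0 := by
    field_simp at h
    linear_combination h
  simpa only [mul_eq_zero, sub_eq_zero] using hfactor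

theorem injOn_exp_I_mul : Set.InjOn (fun t : ℂ ↦ exp (I * t)) {t | t.re ∈ Set.Ico (-π) π} := by
  rintro t ⟨ht₁, ht₂⟩ s ⟨hs₁, hs₂⟩ h
  -- `Im (-(I * t)) = -Re t ∈ (-π, π]`, the range where Mathlib knows `exp` is injective
  have hneg : exp (-(I * t)) = exp (-(I * s)) := by simp only [Complex.exp_neg, h]
  have := exp_inj_of_neg_pi_lt_of_le_pi (by simpa using ht₂) (by simp; linarith)
    (by simpa using hs₂) (by simp; linarith) hneg
  simpa using this

theorem mul_exp_I_mul_mul_exp_I_mul_ofReal_ne {α β : ℝ} (hα : 0 < α) (hβ : 0 < β) {t : ℂ}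
    (ht : |t.im| < Real.log (α / β)) (s : ℝ) : (α : ℂ) * (exp (I * t) * exp (I * s)) ≠ β := by
  intro h
  have hnorm : α * Real.exp (-t.im) = β := by
    simpa [norm_exp_I_mul_ofReal, Complex.norm_exp, abs_of_pos hα, abs_of_pos hβ] using
      congrArg norm h
  have him : t.im = Real.log (α / β) := by
    rw [← Real.exp_eq_exp, Real.exp_log (div_pos hα hβ), eq_div_iff hβ.ne',
      ← hnorm, mul_left_comm, ← Real.exp_add, add_neg_cancel, Real.exp_zero, mul_one]
  exact (lt_irrefl _ ((le_abs_self _).trans_lt (him ▸ ht)))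

theorem ellipse_semiaxes {e a b : ℝ} (he₀ : 0 < e) (he₁ : e < 1) (ha : a = 1 / (1 - e ^ 2))
    (hb : b = a * √(1 - e ^ 2)) :
    0 < b ∧ b < a ∧ (a + b) / (a - b) = (1 + √(1 - e ^ 2)) / (1 - √(1 - e ^ 2)) := by
  have hpos : 0 < 1 - e ^ 2 := by nlinarith
  have ha₀ : 0 < a := ha ▸ by positivity
  have hsqrt₁ : √(1 - e ^ 2) < 1 := (Real.sqrt_lt' one_pos).mpr (by nlinarith)
  refine ⟨hb ▸ by positivity, hb ▸ by nlinarith, ?_⟩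
  rw [hb, ← mul_one_add, ← mul_one_sub, mul_div_mul_left _ _ ha₀.ne']

/-- The parametrization `q₁(t) = h(g(e^{it}))` of the limaçon of Pascal, obtained by
composing the bilinear transformation `h` with the complex parametrization `g` of the
ellipse of eccentricity `e = 2A`, satisfies the injectivity condition (G) on the strip
`|Im z| < log((1 + √(1-4A²))/(1 - √(1-4A²)))`. -/
theorem limacon_optimal_param_condition_G (A : ℝ) (hA₀ : 0 < A) (hA₁ : A < 1 / 2)
    (e a b : ℝ) (he : e = 2 * A) (ha : a = 1 / (1 - e ^ 2)) (hb : b = a * Real.sqrt (1 - e ^ 2))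
    (g : ℂ → ℂ) (hg : ∀ z : ℂ, g z = (((a + b) / 2 : ℝ) : ℂ) * z
        + (((a - b) / 2 : ℝ) : ℂ) * z⁻¹ + ((a * e : ℝ) : ℂ))
    (h : ℂ → ℂ) (hh : ∀ w : ℂ, h w = (-(e : ℂ) * w + 2) / (2 * w))
    (q₁ : ℂ → ℂ) (hq₁ : ∀ z : ℂ, q₁ z = h (g (Complex.exp (Complex.I * z))))
    (t : ℂ) (ht₁ : -π ≤ t.re) (ht₂ : t.re < π)
    (ht₃ : |t.im| < Real.log ((1 + Real.sqrt (1 - 4 * A ^ 2)) / (1 - Real.sqrt (1 - 4 * A ^ 2))))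
    (s : ℝ) (hs₁ : -π ≤ s) (hs₂ : s < π)
    (hgt : g (Complex.exp (Complex.I * t)) ≠ 0)
    (hgs : g (Complex.exp (Complex.I * (s : ℂ))) ≠ 0)
    (heq : q₁ t = q₁ (s : ℂ)) :
    t = (s : ℂ) := by
  obtain ⟨hb₀, hba, hratio⟩ := ellipse_semiaxes (e := e) (by linarith) (by linarith) ha hb
  have hstrip : |t.im| < Real.log ((a + b) / 2 / ((a - b) / 2)) := by
    rwa [div_div_div_cancel_right₀ two_ne_zero, hratio, he,
      show 1 - (2 * A) ^ 2 = 1 - 4 * A ^ 2 by ring]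
  have hgg : g (exp (I * t)) = g (exp (I * s)) :=
    eq_of_neg_mul_add_two_div_two_mul_eq (e : ℂ) hgt hgs (by rw [← hh, ← hh, ← hq₁, ← hq₁, heq])
  rw [hg, hg] at hgg
  rcases eq_or_mul_mul_eq_of_joukowsky_eq (Complex.exp_ne_zero _) (Complex.exp_ne_zero _) hgg
    with hts | hts
  · exact injOn_exp_I_mul ⟨ht₁, ht₂⟩ ⟨by simpa using hs₁, by simpa using hs₂⟩ hts
  · exact absurd hts (mul_exp_I_mul_mul_exp_I_mul_ofReal_ne (by linarith) (by linarith) hstrip s)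
end

section
/- Let A ∈ ℂ with 0 < |A| < π. Then (i) for every nonzero integer n and every real s, |e^{is} + 2πi n / A| ≥ 2π/|A| − 1, and there exist a nonzero integer n and a real s attaining equality; and (ii) if t ∈ ℂ with Re t ∈ [−π, π) and |Im t| < log(2π/|A| − 1), and s ∈ [−π, π) is real, then exp(A e^{it}) = exp(A e^{is}) implies t = s. -/
open Complex Real

/-! If `exp (A w) = exp (A w')` then `w = w' + k c` with `k ∈ ℤ` and `c = 2πi/A`.
For `w' = e^{is}` on the unit circle and `k ≠ 0` the reverse triangle inequality gives
`‖w‖ ≥ |k| ‖c‖ - 1 ≥ 2π/|A| - 1`, with equality when `e^{is}` points opposite to `c`;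
but `‖e^{it}‖ = e^{-Im t}` is smaller than that on the strip. Hence `k = 0`, so
`e^{it} = e^{is}`, and `z ↦ e^{iz}` is injective on `-π ≤ Re z < π`. -/

namespace Complex

lemma norm_exp_I_mul (t : ℂ) : ‖exp (I * t)‖ = Real.exp (-t.im) := by
  simp [norm_exp]

lemma norm_two_pi_I_div (A : ℂ) : ‖2 * π * I / A‖ = 2 * π / ‖A‖ := by
  simp [abs_of_pos pi_pos]

lemma sub_one_le_norm_exp_I_mul_add_intCast_mul (c : ℂ) {n : ℤ} (hn : n ≠ 0) (s : ℝ) :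
    ‖c‖ - 1 ≤ ‖exp (I * s) + n * c‖ := by
  have hn₁ : (1 : ℝ) ≤ ‖(n : ℂ)‖ := by
    rw [norm_intCast]; exact_mod_cast Int.one_le_abs hn
  calc ‖c‖ - 1 ≤ ‖(n : ℂ) * c‖ - ‖exp (I * s)‖ := by
        rw [norm_exp_I_mul, ofReal_im, neg_zero, Real.exp_zero, norm_mul]
        gcongr
        exact le_mul_of_one_le_left (norm_nonneg c) hn₁
    _ ≤ ‖exp (I * s) + n * c‖ := by
        rw [add_comm]; exact norm_sub_le_norm_add _ _

lemma exists_norm_exp_I_mul_add_eq_norm_sub_one {c : ℂ} (hc : 1 ≤ ‖c‖) :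
    ∃ s : ℝ, ‖exp (I * s) + c‖ = ‖c‖ - 1 := by
  refine ⟨arg (-c), ?_⟩
  have hc0 : (‖c‖ : ℂ) ≠ 0 := ofReal_ne_zero.mpr (by linarith)
  have hpolar := norm_mul_exp_arg_mul_I (-c)
  rw [norm_neg, mul_comm _ I] at hpolar
  have : exp (I * arg (-c)) + c = ((‖c‖ - 1) / ‖c‖ : ℝ) * c := by
    push_cast
    field_simp
    linear_combination hpolar
  rw [this, norm_mul, norm_real, Real.norm_of_nonneg (by positivity),
    div_mul_cancel₀ _ (by linarith)]

/-- Mathlib's injectivity strip for `exp` is `-π < Im ≤ π`, so we pass to `exp (-I * z)`. -/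
lemma eq_of_exp_I_mul_eq_s14 {t s : ℂ} (ht : t.re ∈ Set.Ico (-π) π)
    (hs : s.re ∈ Set.Ico (-π) π)
    (h : exp (I * t) = exp (I * s)) : t = s := by
  have him (z : ℂ) : (-I * z).im = -z.re := by simp
  have hneg : exp (-I * t) = exp (-I * s) := by simp only [neg_mul, exp_neg, h]
  refine mul_left_cancel₀ (neg_ne_zero.mpr I_ne_zero)
    (exp_inj_of_neg_pi_lt_of_le_pi ?_ ?_ ?_ ?_ hneg)
  all_goals rw [him]; linarith [ht.1, ht.2, hs.1, hs.2]

lemma eq_of_exp_mul_exp_I_mul_eq {A t : ℂ} {s : ℝ} (hA : A ≠ 0)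
    (ht : t.re ∈ Set.Ico (-π) π) (hs : s ∈ Set.Ico (-π) π)
    (him : Real.exp |t.im| < 2 * π / ‖A‖ - 1)
    (h : exp (A * exp (I * t)) = exp (A * exp (I * s))) : t = s := by
  obtain ⟨k, hk⟩ := exp_eq_exp_iff_exists_int.mp h
  have hshift : exp (I * t) = exp (I * s) + k * (2 * π * I / A) := by
    field_simp
    linear_combination hk
  rcases eq_or_ne k 0 with rfl | hk0
  · exact eq_of_exp_I_mul_eq_s14 ht (by simpa using hs) (by simpa using hshift)
  · have hlower := sub_one_le_norm_exp_I_mul_add_intCast_mul (2 * π * I / A) hk0 s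
    rw [← hshift, norm_exp_I_mul, norm_two_pi_I_div] at hlower
    linarith [Real.exp_le_exp.mpr (neg_le_abs t.im)]

end Complex

/-- For the transcendental-curve parametrization `q(z) = exp(A e^{iz})` with `0 < |A| < π`:
(i) `|e^{is} + 2πin/A| ≥ 2π/|A| - 1` for every nonzero integer `n` and every real `s`,
with equality attained for some nonzero `n` and some real `s`;
(ii) the injectivity condition (G) holds on the strip `|Im z| < log(2π/|A| - 1)`. -/
theorem transcendental_param_grauert (A : ℂ) (hA₀ : 0 < ‖A‖)
    (hA₁ : ‖A‖ < π) :
    ((∀ n : ℤ, n ≠ 0 → ∀ s : ℝ,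
        2 * π / ‖A‖ - 1
          ≤ ‖Complex.exp (Complex.I * (s : ℂ)) + 2 * (π : ℂ) * Complex.I * (n : ℂ) / A‖)
      ∧ (∃ n : ℤ, n ≠ 0 ∧ ∃ s : ℝ,
          ‖Complex.exp (Complex.I * (s : ℂ)) + 2 * (π : ℂ) * Complex.I * (n : ℂ) / A‖
            = 2 * π / ‖A‖ - 1))
    ∧ (∀ t : ℂ, -π ≤ t.re → t.re < π →
        |t.im| < Real.log (2 * π / ‖A‖ - 1) →
        ∀ s : ℝ, -π ≤ s → s < π →
          Complex.exp (A * Complex.exp (Complex.I * t))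
            = Complex.exp (A * Complex.exp (Complex.I * (s : ℂ))) →
          t = (s : ℂ)) := by
  have hA : A ≠ 0 := norm_pos_iff.mp hA₀
  have hc : ‖2 * π * I / A‖ = 2 * π / ‖A‖ := norm_two_pi_I_div A
  have hc₂ : 2 < 2 * π / ‖A‖ := by rw [lt_div_iff₀ hA₀]; linarith
  have hmul (n : ℤ) : 2 * (π : ℂ) * I * n / A = n * (2 * π * I / A) := by ring
  refine ⟨⟨fun n hn s => ?_, ?_⟩, fun t ht₁ ht₂ him s hs₁ hs₂ h => ?_⟩
  · rw [hmul, ← hc]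
    exact sub_one_le_norm_exp_I_mul_add_intCast_mul _ hn s
  · obtain ⟨s, hs⟩ :=
      exists_norm_exp_I_mul_add_eq_norm_sub_one (c := 2 * π * I / A) (by linarith)
    exact ⟨1, one_ne_zero, s, by rw [hmul, Int.cast_one, one_mul, hs, hc]⟩
  · refine eq_of_exp_mul_exp_I_mul_eq hA ⟨ht₁, ht₂⟩ ⟨hs₁, hs₂⟩ ?_ h
    exact (lt_log_iff_exp_lt (by linarith)).mp him
end
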